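/- arXiv:1508.00493 — 2 statements merged into one kernel-verified Lean document; each statement's English description precedes it below -/
import Mathlib

section
/- The subgroup H = ⟨x_0, x_1 x_2 x_1^{-1}⟩ of F is a proper subgroup (in particular x_1 ∉ H); moreover H does not stabilize any point of (0,1) (for every α ∈ (0,1) there exists h ∈ H with h(α) ≠ α), and H·[F,F] = F, i.e. the image of H in the abelianization F/[F,F] is all of F/[F,F]. -/
set_option maxHeartbeats 1000000

noncomputable section

/-- The unit interval `[0,1]` as a type. -/
abbrev I : Type := Set.Icc (0:ℝ) 1

/-- The underlying function of the generator `x₀` of Thompson's group `F`. -/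
def x0fun (t : ℝ) : ℝ := if t ≤ 1/4 then 2*t else if t ≤ 1/2 then t + 1/4 else t/2 + 1/2

/-- The inverse of `x0fun`. -/
def x0inv (t : ℝ) : ℝ := if t ≤ 1/2 then t/2 else if t ≤ 3/4 then t - 1/4 else 2*t - 1

/-- The underlying function of the generator `x₁` of Thompson's group `F`. -/
def x1fun (t : ℝ) : ℝ :=
  if t ≤ 1/2 then t else if t ≤ 5/8 then 2*t - 1/2 else if t ≤ 3/4 then t + 1/8 else t/2 + 1/2

/-- The inverse of `x1fun`. -/
def x1inv (t : ℝ) : ℝ :=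
  if t ≤ 1/2 then t else if t ≤ 3/4 then t/2 + 1/4 else if t ≤ 7/8 then t - 1/8 else 2*t - 1

/-- The generator `x₀` of Thompson's group `F`, as a bijection of `[0,1]`. -/
def x₀ : Equiv.Perm I where
  toFun t := ⟨x0fun t.1, by
    obtain ⟨h0, h1⟩ := Set.mem_Icc.mp t.2
    simp only [Set.mem_Icc, x0fun]
    split_ifs <;> constructor <;> linarith⟩
  invFun t := ⟨x0inv t.1, by
    obtain ⟨h0, h1⟩ := Set.mem_Icc.mp t.2
    simp only [Set.mem_Icc, x0inv]
    split_ifs <;> constructor <;> linarith⟩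
  left_inv t := by
    obtain ⟨h0, h1⟩ := Set.mem_Icc.mp t.2
    apply Subtype.ext
    show x0inv (x0fun t.1) = t.1
    simp only [x0fun, x0inv]
    split_ifs <;> linarith
  right_inv t := by
    obtain ⟨h0, h1⟩ := Set.mem_Icc.mp t.2
    apply Subtype.ext
    show x0fun (x0inv t.1) = t.1
    simp only [x0fun, x0inv]
    split_ifs <;> linarith

/-- The generator `x₁` of Thompson's group `F`, as a bijection of `[0,1]`. -/
def x₁ : Equiv.Perm I where
  toFun t := ⟨x1fun t.1, by
    obtain ⟨h0, h1⟩ := Set.mem_Icc.mp t.2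
    simp only [Set.mem_Icc, x1fun]
    split_ifs <;> constructor <;> linarith⟩
  invFun t := ⟨x1inv t.1, by
    obtain ⟨h0, h1⟩ := Set.mem_Icc.mp t.2
    simp only [Set.mem_Icc, x1inv]
    split_ifs <;> constructor <;> linarith⟩
  left_inv t := by
    obtain ⟨h0, h1⟩ := Set.mem_Icc.mp t.2
    apply Subtype.ext
    show x1inv (x1fun t.1) = t.1
    simp only [x1fun, x1inv]
    split_ifs <;> linarith
  right_inv t := by
    obtain ⟨h0, h1⟩ := Set.mem_Icc.mp t.2
    apply Subtype.ext
    show x1fun (x1inv t.1) = t.1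
    simp only [x1fun, x1inv]
    split_ifs <;> linarith

/-- Composition in Thompson's group `F` is from left to right: the product `f·g` in the paper
is the function `t ↦ g (f t)`.  In Lean, `Equiv.Perm` multiplication is composition from right
to left: `(f * g) t = f (g t)`.  Hence a paper product `a₁ a₂ ⋯ aₙ` corresponds to the Lean
product `aₙ * ⋯ * a₂ * a₁`.

`x i` is the standard generator `x_i` of Thompson's group `F`: here `x_0, x_1` are the explicit
piecewise-linear maps, and for `i ≥ 1`, `x_{i+1} = x_0^{-i} x_1 x_0^{i}` (left-to-right
composition), which in Lean's convention is `x₀ ^ i * x₁ * (x₀ ^ i)⁻¹`. -/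
def x (i : ℕ) : Equiv.Perm I := if i = 0 then x₀ else x₀ ^ (i-1) * x₁ * (x₀ ^ (i-1))⁻¹

/-- Thompson's group `F`, realized as the group of increasing piecewise-linear homeomorphisms of
`[0,1]` with dyadic breakpoints and slopes powers of 2; it is generated by `x_0` and `x_1`. -/
def F : Subgroup (Equiv.Perm I) := Subgroup.closure {x 0, x 1}

/-- The subgroup `G = ⟨x_0x_2, x_1x_2⟩` of `F` (products written left-to-right, so
`x_0x_2` is the Lean element `x 2 * x 0`). -/
def G : Subgroup (Equiv.Perm I) := Subgroup.closure {x 2 * x 0, x 2 * x 1}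

/-- Jones' subgroup `F⃗ = ⟨x_0x_1, x_1x_2, x_2x_3⟩` of `F` (products written left-to-right). -/
def JonesF : Subgroup (Equiv.Perm I) := Subgroup.closure {x 1 * x 0, x 2 * x 1, x 3 * x 2}

lemma x_mem_F (i : ℕ) : x i ∈ F := by
  have h0 : x 0 ∈ F := Subgroup.subset_closure (by simp)
  have h1 : x 1 ∈ F := Subgroup.subset_closure (by simp)
  have hx0 : x₀ ∈ F := by simpa [x] using h0
  have hx1 : x₁ ∈ F := by simpa [x] using h1
  rcases Nat.eq_zero_or_pos i with h | h
  · subst h; exact h0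
  · have : x i = x₀ ^ (i-1) * x₁ * (x₀ ^ (i-1))⁻¹ := by
      simp [x, Nat.pos_iff_ne_zero.mp h]
    rw [this]
    exact mul_mem (mul_mem (pow_mem hx0 _) hx1) (inv_mem (pow_mem hx0 _))

lemma y0_mem_G : x 2 * x 0 ∈ G := Subgroup.subset_closure (by simp)

lemma y1_mem_G : x 2 * x 1 ∈ G := Subgroup.subset_closure (by simp)

/-- The length `|w|` of an element of `F`: the minimal `n` such that `w` is a product of `n`
elements of `{x_i^{±1} : i ≥ 0}`.  This equals the length of the normal form of `w`. -/
def len (w : Equiv.Perm I) : ℕ :=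
  sInf {n | ∃ l : List (Equiv.Perm I), l.length = n ∧
    (∀ a ∈ l, ∃ i : ℕ, a = x i ∨ a = (x i)⁻¹) ∧ l.prod = w}

/-- The element of `F` given by the positive word `x_{i_1} x_{i_2} ⋯ x_{i_n}` (composition from
left to right), where `l = [i_1, i_2, …, i_n]`.  Since Lean's multiplication of permutations is
composition from right to left, this is the Lean product of the reversed list of letters. -/
def pp (l : List ℕ) : Equiv.Perm I := ((l.map x).reverse).prod

/-- `l = [i_1, …, i_n]` encodes a *block*: a positive normal form `x_{i_1}⋯x_{i_n}`
(so `i_1 ≤ ⋯ ≤ i_n`) with `i_1 ≠ i_n` and `i_j < i_1 + j` for all `j = 1, …, n`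
(here with 0-based indexing: `l[k] < l[0] + k + 1`). -/
def IsBlock (l : List ℕ) : Prop :=
  l ≠ [] ∧ l.Pairwise (· ≤ ·) ∧ l.headI ≠ l.getLastD 0 ∧
    ∀ k < l.length, l.getD k 0 < l.headI + k + 1

/-- The double coset `F⃗ a F⃗` of Jones' subgroup.  (As a set this does not depend on the
composition convention, since `u, v` range over all of `F⃗`.) -/
def dCoset (a : Equiv.Perm I) : Set (Equiv.Perm I) :=
  {w | ∃ u ∈ JonesF, ∃ v ∈ JonesF, w = v * a * u}

/-- A real number is dyadic if it has the form `a / 2^n` with `a, n` natural numbers. -/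
def IsDyadic (α : ℝ) : Prop := ∃ (a : ℕ) (n : ℕ), α = a / 2^n

/-- The subgroup of all permutations fixing every point of `U`. -/
def fixing (U : Set ℝ) : Subgroup (Equiv.Perm I) where
  carrier := {g | ∀ t : I, (t : ℝ) ∈ U → g t = t}
  one_mem' := fun _ _ => rfl
  mul_mem' := by
    intro a b ha hb t ht
    simp only [Equiv.Perm.mul_apply]
    rw [hb t ht, ha t ht]
  inv_mem' := by
    intro a ha t ht
    conv_lhs => rw [← ha t ht]
    exact a.symm_apply_apply t

/-- `H_U`: the stabilizer in `F` of the finite set `U ⊂ (0,1)`, i.e. the subgroup of all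
elements of `F` fixing every point of `U`. -/
def HU (U : Set ℝ) : Subgroup (Equiv.Perm I) := F ⊓ fixing U

/-- The subgroup `H = ⟨x_0, x_1 x_2 x_1⁻¹⟩` of `F` (paper words are left-to-right, so
`x_1 x_2 x_1⁻¹` is the Lean element `(x 1)⁻¹ * x 2 * x 1`). -/
def H15 : Subgroup (Equiv.Perm I) := Subgroup.closure {x 0, (x 1)⁻¹ * x 2 * x 1}

/-!
Read points of `[0,1)` through their finite binary expansions.  Then `x₀` acts by the prefix
substitutions `00 ↦ 0`, `01 ↦ 10`, `1 ↦ 11`, and the second generator `w = x₁x₂x₁⁻¹` of `H` by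
`1010 ↦ 101`, `1011 ↦ 110`, `11 ↦ 111`, fixing `[0, 5/8)`.  A four-state automaton reaches the
same state after both sides of each of these substitutions, so the set of points whose expansion
it accepts is invariant under `H`.  But `x₁` maps `5/8 = 0.101₂`, which is rejected, to
`3/4 = 0.11₂`, which is accepted; hence `x₁ ∉ H`.  Finally, `x₂` is a conjugate of
`x₁` by `x₀`, so `x₁` is a commutator times `w`, and `H[F,F] = F`.
-/

open scoped Pointwise

section BinaryAutomaton

variable {Q : Type*} {step : Q → Bool → Q} {out : Q → Prop}

def prependDigits : List Bool → ℝ → ℝ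
  | [], s => s
  | d :: p, s => (cond d 1 0 + prependDigits p s) / 2

variable (step out) in
/-- The automaton `(step, out)` started in `q` accepts the finite binary expansion of `t ∈ [0,1)`;
trailing zeros are harmless once `out` is invariant under reading `0`. -/
inductive AcceptsBinary : Q → ℝ → Prop
  | zero {q : Q} : out q → AcceptsBinary q 0
  | digit {q : Q} (d : Bool) {s : ℝ} : s ∈ Set.Ico 0 1 → AcceptsBinary (step q d) s →
      AcceptsBinary q ((cond d 1 0 + s) / 2)

lemma prependDigits_mem_Ico {s : ℝ} (hs : s ∈ Set.Ico 0 1) (p : List Bool) :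
    prependDigits p s ∈ Set.Ico 0 1 := by
  induction p with
  | nil => exact hs
  | cons d p ih =>
    obtain ⟨h0, h1⟩ := ih
    cases d <;> simp only [prependDigits, cond_true, cond_false] <;> constructor <;> linarith

lemma cond_add_div_two_inj {d d' : Bool} {s s' : ℝ} (hs : s ∈ Set.Ico 0 1)
    (hs' : s' ∈ Set.Ico 0 1) (h : (cond d 1 0 + s) / 2 = (cond d' 1 0 + s') / 2) :
    d = d' ∧ s = s' := by
  obtain ⟨h0, h1⟩ := hs
  obtain ⟨h0', h1'⟩ := hs'
  cases d <;> cases d' <;> simp only [cond_true, cond_false] at h <;>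
    first | exact ⟨rfl, by linarith⟩ | (exfalso; linarith)

lemma acceptsBinary_zero_iff (hout : ∀ q, out (step q false) ↔ out q) {q : Q} :
    AcceptsBinary step out q 0 ↔ out q := by
  refine ⟨fun h => ?_, AcceptsBinary.zero⟩
  generalize ht : (0 : ℝ) = t at h
  induction h with
  | zero hq => exact hq
  | digit d hs _ ih =>
    obtain ⟨rfl, rfl⟩ := cond_add_div_two_inj (d := false) ⟨le_rfl, one_pos⟩ hs
      (by simpa using ht)
    exact (hout _).1 (ih rfl)

lemma acceptsBinary_digit_iff (hout : ∀ q, out (step q false) ↔ out q) {q : Q} {d : Bool}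
    {s : ℝ} (hs : s ∈ Set.Ico 0 1) :
    AcceptsBinary step out q ((cond d 1 0 + s) / 2) ↔ AcceptsBinary step out (step q d) s := by
  refine ⟨fun h => ?_, AcceptsBinary.digit d hs⟩
  generalize ht : (cond d 1 0 + s) / 2 = t at h
  cases h with
  | zero hq =>
    obtain ⟨rfl, rfl⟩ := cond_add_div_two_inj hs (d' := false) ⟨le_rfl, one_pos⟩
      (by simpa using ht)
    exact (acceptsBinary_zero_iff hout).2 ((hout q).2 hq)
  | digit d' hs' h' =>
    obtain ⟨rfl, rfl⟩ := cond_add_div_two_inj hs hs' ht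
    exact h'

lemma acceptsBinary_prependDigits_iff (hout : ∀ q, out (step q false) ↔ out q) {s : ℝ}
    (hs : s ∈ Set.Ico 0 1) (p : List Bool) {q : Q} :
    AcceptsBinary step out q (prependDigits p s) ↔ AcceptsBinary step out (p.foldl step q) s := by
  induction p generalizing q with
  | nil => rfl
  | cons d p ih => exact (acceptsBinary_digit_iff hout (prependDigits_mem_Ico hs p)).trans ih

lemma acceptsBinary_iff_of_foldl_eq (hout : ∀ q, out (step q false) ↔ out q)
    {p p' : List Bool} {q : Q} (hq : p.foldl step q = p'.foldl step q) {s t t' : ℝ}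
    (hs : s ∈ Set.Ico 0 1) (ht : prependDigits p s = t) (ht' : prependDigits p' s = t') :
    AcceptsBinary step out q t ↔ AcceptsBinary step out q t' := by
  rw [← ht, ← ht', acceptsBinary_prependDigits_iff hout hs,
    acceptsBinary_prependDigits_iff hout hs, hq]

end BinaryAutomaton

inductive H15State
  | init | a | b | c

namespace H15State

def step : H15State → Bool → H15State
  | init, false => a
  | init, true => b
  | a, false => a
  | a, true => c
  | b, false => c
  | b, true => b
  | c, false => b
  | c, true => a

def out : H15State → Prop
  | b | c => True
  | init | a => False

lemma out_step_false (q : H15State) : out (step q false) ↔ out q := by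
  cases q <;> simp [step, out]

def accepted : Set I := {t | AcceptsBinary step out init t}

lemma iff_of_foldl_eq {p p' : List Bool} (hq : p.foldl step init = p'.foldl step init)
    {s t t' : ℝ} (hs : s ∈ Set.Ico 0 1) (ht : prependDigits p s = t)
    (ht' : prependDigits p' s = t') :
    AcceptsBinary step out init t ↔ AcceptsBinary step out init t' :=
  acceptsBinary_iff_of_foldl_eq out_step_false hq hs ht ht'

lemma not_acceptsBinary_five_eighths : ¬ AcceptsBinary step out init (5/8) := by
  have h := acceptsBinary_prependDigits_iff out_step_false (s := 0) ⟨le_rfl, one_pos⟩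
    [true, false, true] (q := init)
  rw [acceptsBinary_zero_iff out_step_false] at h
  norm_num [prependDigits, step, out] at h
  exact h

lemma acceptsBinary_three_quarters : AcceptsBinary step out init (3/4) := by
  have h := acceptsBinary_prependDigits_iff out_step_false (s := 0) ⟨le_rfl, one_pos⟩
    [true, true] (q := init)
  rw [acceptsBinary_zero_iff out_step_false] at h
  norm_num [prependDigits, step, out] at h
  exact h

end H15State

def wfun (t : ℝ) : ℝ := if t ≤ 5/8 then t else if t ≤ 3/4 then 2 * t - 5/8 else t / 2 + 1/2

section Pieces

variable {t : ℝ}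

lemma x0fun_eq_two_mul (h : t ≤ 1/4) : x0fun t = 2 * t := by
  unfold x0fun; split_ifs <;> linarith
lemma x0fun_eq_add_quarter (h₁ : 1/4 ≤ t) (h₂ : t ≤ 1/2) : x0fun t = t + 1/4 := by
  unfold x0fun; split_ifs <;> linarith
lemma x0fun_eq_half_add_half (h : 1/2 ≤ t) : x0fun t = t / 2 + 1/2 := by
  unfold x0fun; split_ifs <;> linarith

lemma x0inv_eq_half (h : t ≤ 1/2) : x0inv t = t / 2 := by
  unfold x0inv; split_ifs <;> linarith
lemma x0inv_eq_sub_quarter (h₁ : 1/2 ≤ t) (h₂ : t ≤ 3/4) : x0inv t = t - 1/4 := by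
  unfold x0inv; split_ifs <;> linarith
lemma x0inv_eq_two_mul_sub_one (h : 3/4 ≤ t) : x0inv t = 2 * t - 1 := by
  unfold x0inv; split_ifs <;> linarith

lemma x1fun_eq_self (h : t ≤ 1/2) : x1fun t = t := by
  unfold x1fun; split_ifs <;> linarith
lemma x1fun_eq_two_mul_sub_half (h₁ : 1/2 ≤ t) (h₂ : t ≤ 5/8) : x1fun t = 2 * t - 1/2 := by
  unfold x1fun; split_ifs <;> linarith
lemma x1fun_eq_add_eighth (h₁ : 5/8 ≤ t) (h₂ : t ≤ 3/4) : x1fun t = t + 1/8 := by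
  unfold x1fun; split_ifs <;> linarith
lemma x1fun_eq_half_add_half (h : 3/4 ≤ t) : x1fun t = t / 2 + 1/2 := by
  unfold x1fun; split_ifs <;> linarith

lemma x1inv_eq_self (h : t ≤ 1/2) : x1inv t = t := by
  unfold x1inv; split_ifs <;> linarith
lemma x1inv_eq_half_add_quarter (h₁ : 1/2 ≤ t) (h₂ : t ≤ 3/4) : x1inv t = t / 2 + 1/4 := by
  unfold x1inv; split_ifs <;> linarith
lemma x1inv_eq_sub_eighth (h₁ : 3/4 ≤ t) (h₂ : t ≤ 7/8) : x1inv t = t - 1/8 := by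
  unfold x1inv; split_ifs <;> linarith
lemma x1inv_eq_two_mul_sub_one (h : 7/8 ≤ t) : x1inv t = 2 * t - 1 := by
  unfold x1inv; split_ifs <;> linarith

lemma wfun_eq_self (h : t ≤ 5/8) : wfun t = t := by
  unfold wfun; split_ifs <;> linarith
lemma wfun_eq_two_mul_sub (h₁ : 5/8 ≤ t) (h₂ : t ≤ 3/4) : wfun t = 2 * t - 5/8 := by
  unfold wfun; split_ifs <;> linarith
lemma wfun_eq_half_add_half (h : 3/4 ≤ t) : wfun t = t / 2 + 1/2 := by
  unfold wfun; split_ifs <;> linarith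

end Pieces

lemma x0fun_ne_self {t : ℝ} (h0 : 0 < t) (h1 : t < 1) : x0fun t ≠ t := by
  rcases le_or_gt t (1/4) with h | h
  · rw [x0fun_eq_two_mul h]; linarith
  rcases le_or_gt t (1/2) with h' | h'
  · rw [x0fun_eq_add_quarter h.le h']; linarith
  · rw [x0fun_eq_half_add_half h'.le]; linarith

lemma x_two_eq : x 2 = x 0 * x 1 * (x 0)⁻¹ := by
  simp [x]

lemma conj_apply (t : I) : (((x 1)⁻¹ * x 2 * x 1) t : ℝ) = wfun t := by
  obtain ⟨t, h0, h1⟩ := t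
  show x1inv (x0fun (x1fun (x0inv (x1fun t)))) = wfun t
  rcases le_or_gt t (1/2) with hA | hA
  · rw [x1fun_eq_self hA, x0inv_eq_half hA, x1fun_eq_self (by linarith),
      x0fun_eq_two_mul (by linarith), x1inv_eq_self (by linarith), wfun_eq_self (by linarith)]
    ring
  rcases le_or_gt t (5/8) with hB | hB
  · rw [x1fun_eq_two_mul_sub_half hA.le hB, x0inv_eq_sub_quarter (by linarith) (by linarith),
      x1fun_eq_self (by linarith), x0fun_eq_add_quarter (by linarith) (by linarith),
      x1inv_eq_half_add_quarter (by linarith) (by linarith), wfun_eq_self hB]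
    ring
  rcases le_or_gt t (11/16) with hC | hC
  · rw [x1fun_eq_add_eighth hB.le (by linarith), x0inv_eq_two_mul_sub_one (by linarith),
      x1fun_eq_two_mul_sub_half (by linarith) (by linarith), x0fun_eq_half_add_half (by linarith),
      x1inv_eq_sub_eighth (by linarith) (by linarith), wfun_eq_two_mul_sub hB.le (by linarith)]
    ring
  rcases le_or_gt t (3/4) with hD | hD
  · rw [x1fun_eq_add_eighth hB.le hD, x0inv_eq_two_mul_sub_one (by linarith),
      x1fun_eq_add_eighth (by linarith) (by linarith), x0fun_eq_half_add_half (by linarith),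
      x1inv_eq_two_mul_sub_one (by linarith), wfun_eq_two_mul_sub hB.le hD]
    ring
  · rw [x1fun_eq_half_add_half hD.le, x0inv_eq_two_mul_sub_one (by linarith),
      x1fun_eq_half_add_half (by linarith), x0fun_eq_half_add_half (by linarith),
      x1inv_eq_two_mul_sub_one (by linarith), wfun_eq_half_add_half hD.le]
    ring

namespace H15State

lemma x_zero_mem_stabilizer : x 0 ∈ MulAction.stabilizer (Equiv.Perm I) accepted := by
  rw [MulAction.mem_stabilizer_set]
  rintro ⟨t, ht0, ht1⟩
  show AcceptsBinary step out init (x0fun t) ↔ AcceptsBinary step out init t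
  rcases lt_or_ge t (1/4) with h₁ | h₁
  · refine iff_of_foldl_eq (p := [false]) (p' := [false, false]) rfl (s := 4 * t)
      ⟨by linarith, by linarith⟩ ?_ ?_ <;>
      simp only [prependDigits, cond_false, x0fun_eq_two_mul h₁.le] <;> ring
  rcases lt_or_ge t (1/2) with h₂ | h₂
  · refine iff_of_foldl_eq (p := [true, false]) (p' := [false, true]) rfl (s := 4 * t - 1)
      ⟨by linarith, by linarith⟩ ?_ ?_ <;>
      simp only [prependDigits, cond_true, cond_false, x0fun_eq_add_quarter h₁ h₂.le] <;> ring
  rcases ht1.lt_or_eq with h₃ | rfl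
  · refine iff_of_foldl_eq (p := [true, true]) (p' := [true]) rfl (s := 2 * t - 1)
      ⟨by linarith, by linarith⟩ ?_ ?_ <;>
      simp only [prependDigits, cond_true, x0fun_eq_half_add_half h₂] <;> ring
  · norm_num [x0fun_eq_half_add_half h₂]

lemma conj_mem_stabilizer :
    (x 1)⁻¹ * x 2 * x 1 ∈ MulAction.stabilizer (Equiv.Perm I) accepted := by
  rw [MulAction.mem_stabilizer_set]
  rintro ⟨t, ht0, ht1⟩
  show AcceptsBinary step out init (((x 1)⁻¹ * x 2 * x 1) ⟨t, ht0, ht1⟩ : ℝ) ↔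
    AcceptsBinary step out init t
  rw [conj_apply]
  rcases lt_or_ge t (5/8) with h₁ | h₁
  · rw [wfun_eq_self h₁.le]
  rcases lt_or_ge t (11/16) with h₂ | h₂
  · refine iff_of_foldl_eq (p := [true, false, true]) (p' := [true, false, true, false]) rfl
      (s := 16 * t - 10) ⟨by linarith, by linarith⟩ ?_ ?_ <;>
      simp only [prependDigits, cond_true, cond_false, wfun_eq_two_mul_sub h₁ (by linarith)] <;> ring
  rcases lt_or_ge t (3/4) with h₃ | h₃
  · refine iff_of_foldl_eq (p := [true, true, false]) (p' := [true, false, true, true]) rfl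
      (s := 16 * t - 11) ⟨by linarith, by linarith⟩ ?_ ?_ <;>
      simp only [prependDigits, cond_true, cond_false, wfun_eq_two_mul_sub h₁ h₃.le] <;> ring
  rcases ht1.lt_or_eq with h₄ | rfl
  · refine iff_of_foldl_eq (p := [true, true, true]) (p' := [true, true]) rfl
      (s := 4 * t - 3) ⟨by linarith, by linarith⟩ ?_ ?_ <;>
      simp only [prependDigits, cond_true, wfun_eq_half_add_half h₃] <;> ring
  · norm_num [wfun_eq_half_add_half h₃]

lemma H15_le_stabilizer : H15 ≤ MulAction.stabilizer (Equiv.Perm I) accepted :=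
  (Subgroup.closure_le _).2 <| Set.insert_subset_iff.2
    ⟨x_zero_mem_stabilizer, Set.singleton_subset_iff.2 conj_mem_stabilizer⟩

lemma x_one_not_mem_stabilizer : x 1 ∉ MulAction.stabilizer (Equiv.Perm I) accepted := by
  rw [MulAction.mem_stabilizer_set]
  intro h
  have hx1 : x1fun (5/8) = 3/4 := by rw [x1fun_eq_two_mul_sub_half] <;> norm_num
  refine not_acceptsBinary_five_eighths ((h ⟨5/8, by norm_num, by norm_num⟩).1 ?_)
  show AcceptsBinary step out init (x1fun (5/8))
  exact hx1 ▸ acceptsBinary_three_quarters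

end H15State

section Generation

open Subgroup
open scoped commutatorElement

variable {G : Type*} [Group G] (a b : G)

lemma closure_pair_conj_le : closure {a, b⁻¹ * (a * b * a⁻¹) * b} ≤ closure {a, b} := by
  have ha : a ∈ closure {a, b} := subset_closure (by simp)
  have hb : b ∈ closure {a, b} := subset_closure (by simp)
  rw [closure_le, Set.insert_subset_iff, Set.singleton_subset_iff]
  exact ⟨ha, mul_mem (mul_mem (inv_mem hb) (mul_mem (mul_mem ha hb) (inv_mem ha))) hb⟩

lemma closure_pair_conj_sup_commutator :
    closure {a, b⁻¹ * (a * b * a⁻¹) * b} ⊔ ⁅closure {a, b}, closure {a, b}⁆ = closure {a, b} := by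
  refine le_antisymm (sup_le (closure_pair_conj_le a b) (commutator_le_self _)) ?_
  have ha : a ∈ closure {a, b⁻¹ * (a * b * a⁻¹) * b} := subset_closure (by simp)
  have hw : b⁻¹ * (a * b * a⁻¹) * b ∈ closure {a, b⁻¹ * (a * b * a⁻¹) * b} :=
    subset_closure (by simp)
  have hc : ⁅a, b⁻¹⁆ ∈ ⁅closure {a, b}, closure {a, b}⁆ :=
    commutator_mem_commutator (subset_closure (by simp)) (inv_mem (subset_closure (by simp)))
  have hb : ⁅a, b⁻¹⁆ * (b⁻¹ * (a * b * a⁻¹) * b) = b := by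
    rw [commutatorElement_def]; group
  have hb_mem := mul_mem (mem_sup_right hc) (mem_sup_left hw)
  rw [hb] at hb_mem
  rw [closure_le, Set.insert_subset_iff, Set.singleton_subset_iff]
  exact ⟨mem_sup_left ha, hb_mem⟩

end Generation

/-- `H = ⟨x_0, x_1x_2x_1⁻¹⟩` is a proper subgroup of `F` (in particular
`x_1 ∉ H`), `H` does not stabilize any point of `(0,1)`, and `H·[F,F] = F`. -/
theorem stmt15 :
    H15 < F ∧ x 1 ∉ H15 ∧
    (∀ (α : ℝ) (h0 : 0 < α) (h1 : α < 1), ∃ h ∈ H15,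
      h ⟨α, Set.mem_Icc.mpr ⟨h0.le, h1.le⟩⟩ ≠ ⟨α, Set.mem_Icc.mpr ⟨h0.le, h1.le⟩⟩) ∧
    H15 ⊔ ⁅F, F⁆ = F := by
  have hH : H15 = Subgroup.closure {x 0, (x 1)⁻¹ * (x 0 * x 1 * (x 0)⁻¹) * x 1} := by
    rw [H15, x_two_eq]
  have hx1 : x 1 ∉ H15 := fun h =>
    H15State.x_one_not_mem_stabilizer (H15State.H15_le_stabilizer h)
  refine ⟨?_, hx1, fun α h0 h1 => ⟨x 0, Subgroup.subset_closure (by simp), fun h =>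
    x0fun_ne_self h0 h1 (congrArg Subtype.val h)⟩, ?_⟩
  · exact (hH ▸ closure_pair_conj_le (x 0) (x 1)).lt_of_ne fun h => hx1 (h ▸ x_mem_F 1)
  · rw [hH]
    exact closure_pair_conj_sup_commutator (x 0) (x 1)
end
end

section
/- Let U be a finite set of dyadic rationals in (0,1) and let g ∈ F with g ∉ H_U. Then there exists a proper subset V ⊊ U such that the subgroup ⟨H_U, g⟩ generated by H_U and g contains H_V. -/
/-!
Put `N = ⟨H_U, g⟩` and `W = g(U)`. Then `H_W = g H_U g⁻¹ ≤ N`, and `U ⊄ W`: otherwise the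
increasing map `g⁻¹` would permute the finite set `U` monotonically, hence fix it, and `g ∈ H_U`.

The key step: if `H_{S ∪ {α}} ≤ N` and `H_T ≤ N` with `α ∉ T`, then `H_S ≤ N`. Given
`f ∈ H_S`, an element `s ∈ H_{S ∪ {α}}` pushes the points of `T` away from `α` and `f(α)`; then an
element `h ∈ F` supported in a small interval around them sends `α` to `f(α)` and fixes `S` and
`s(T)`, so `h ∈ s H_T s⁻¹ ≤ N` and `h⁻¹ f ∈ H_{S ∪ {α}}`. Removing the points of `U \ W` one at
a time gives `H_{U ∩ W} ≤ N`.

Elements with prescribed support come from the copies of `F` acting on `[0,1/2]` and `[1/2,1]`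
(the latter generated by `x₁, x₂`), combined with the transitivity of `F` on the dyadic points
of `(0,1)`.
-/

set_option maxHeartbeats 1000000

noncomputable section

open Set

lemma IsDyadic.add {x y : ℝ} (hx : IsDyadic x) (hy : IsDyadic y) : IsDyadic (x + y) := by
  obtain ⟨a, n, rfl⟩ := hx
  obtain ⟨b, m, rfl⟩ := hy
  refine ⟨a * 2 ^ m + b * 2 ^ n, n + m, ?_⟩
  push_cast
  field_simp
  ring

lemma IsDyadic.sub {x y : ℝ} (hx : IsDyadic x) (hy : IsDyadic y) (hyx : y ≤ x) :
    IsDyadic (x - y) := by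
  obtain ⟨a, n, rfl⟩ := hx
  obtain ⟨b, m, rfl⟩ := hy
  have hle : b * 2 ^ n ≤ a * 2 ^ m := by
    rw [div_le_div_iff₀ (by positivity) (by positivity)] at hyx
    exact_mod_cast hyx
  refine ⟨a * 2 ^ m - b * 2 ^ n, n + m, ?_⟩
  push_cast [Nat.cast_sub hle]
  field_simp
  ring

lemma IsDyadic.div_two {x : ℝ} (hx : IsDyadic x) : IsDyadic (x / 2) := by
  obtain ⟨a, n, rfl⟩ := hx
  exact ⟨a, n + 1, by rw [pow_succ]; ring⟩

lemma IsDyadic.two_mul {x : ℝ} (hx : IsDyadic x) : IsDyadic (2 * x) := by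
  rw [_root_.two_mul]
  exact hx.add hx

lemma exists_dyadic_btwn {x y : ℝ} (hx : 0 ≤ x) (hxy : x < y) :
    ∃ d, IsDyadic d ∧ x < d ∧ d < y := by
  obtain ⟨n, hn⟩ := exists_pow_lt_of_lt_one (sub_pos.2 hxy) (by norm_num : (1 / 2 : ℝ) < 1)
  have h2n : (0 : ℝ) < 2 ^ n := by positivity
  have hgap : 1 < (y - x) * 2 ^ n := by
    rwa [div_pow, one_pow, div_lt_iff₀ h2n] at hn
  refine ⟨(⌊x * 2 ^ n⌋₊ + 1 : ℕ) / 2 ^ n, ⟨_, n, rfl⟩, ?_, ?_⟩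
  · rw [lt_div_iff₀ h2n]
    exact_mod_cast Nat.lt_floor_add_one (x * 2 ^ n)
  · rw [div_lt_iff₀ h2n]
    have := Nat.floor_le (by positivity : 0 ≤ x * 2 ^ n)
    push_cast
    linarith

lemma x0fun_strictMono : StrictMono x0fun := fun s t h => by
  unfold x0fun; split_ifs <;> linarith

lemma x1fun_strictMono : StrictMono x1fun := fun s t h => by
  unfold x1fun; split_ifs <;> linarith

lemma IsDyadic.x0fun {t : ℝ} (h : IsDyadic t) : IsDyadic (x0fun t) := by
  unfold _root_.x0fun; split_ifs
  · exact h.two_mul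
  · exact h.add ⟨1, 2, by norm_num⟩
  · exact h.div_two.add ⟨1, 1, by norm_num⟩

lemma IsDyadic.x0inv {t : ℝ} (h : IsDyadic t) : IsDyadic (x0inv t) := by
  unfold _root_.x0inv; split_ifs
  · exact h.div_two
  · exact h.sub ⟨1, 2, by norm_num⟩ (by linarith)
  · exact h.two_mul.sub ⟨1, 0, by norm_num⟩ (by linarith)

lemma IsDyadic.x1fun {t : ℝ} (h : IsDyadic t) : IsDyadic (x1fun t) := by
  unfold _root_.x1fun; split_ifs
  · exact h
  · exact h.two_mul.sub ⟨1, 1, by norm_num⟩ (by linarith)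
  · exact h.add ⟨1, 3, by norm_num⟩
  · exact h.div_two.add ⟨1, 1, by norm_num⟩

lemma IsDyadic.x1inv {t : ℝ} (h : IsDyadic t) : IsDyadic (x1inv t) := by
  unfold _root_.x1inv; split_ifs
  · exact h
  · exact h.div_two.add ⟨1, 2, by norm_num⟩
  · exact h.sub ⟨1, 3, by norm_num⟩ (by linarith)
  · exact h.two_mul.sub ⟨1, 0, by norm_num⟩ (by linarith)

def dyadicOrderPerm : Subgroup (Equiv.Perm I) where
  carrier := {f | StrictMono f ∧ ∀ t : I, IsDyadic (f t : ℝ) ↔ IsDyadic (t : ℝ)}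
  one_mem' := ⟨strictMono_id, fun _ => Iff.rfl⟩
  mul_mem' := fun ⟨hf, hfd⟩ ⟨hg, hgd⟩ => ⟨hf.comp hg, fun t => (hfd _).trans (hgd t)⟩
  inv_mem' := fun {f} ⟨hf, hfd⟩ =>
    ⟨fun s t h => hf.lt_iff_lt.1 (by simpa using h), fun t => by simpa using (hfd (f⁻¹ t)).symm⟩

lemma mem_dyadicOrderPerm_of {f : Equiv.Perm I} {φ ψ : ℝ → ℝ} (hφ : ∀ t : I, (f t : ℝ) = φ t)
    (hψ : ∀ t : I, (f⁻¹ t : ℝ) = ψ t) (hmono : StrictMono φ)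
    (hφd : ∀ t, IsDyadic t → IsDyadic (φ t)) (hψd : ∀ t, IsDyadic t → IsDyadic (ψ t)) :
    f ∈ dyadicOrderPerm := by
  refine ⟨fun s t h => by rw [← Subtype.coe_lt_coe, hφ, hφ]; exact hmono h,
    fun t => ⟨fun h => ?_, fun h => ?_⟩⟩
  · simpa [← hψ] using hψd _ h
  · rw [hφ]; exact hφd _ h

lemma x_zero : x 0 = x₀ := by simp [x]

lemma x_one : x 1 = x₁ := by simp [x]

lemma x₀_mem_F : x₀ ∈ F := x_zero ▸ x_mem_F 0

lemma x₁_mem_F : x₁ ∈ F := x_one ▸ x_mem_F 1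

lemma F_le_dyadicOrderPerm : F ≤ dyadicOrderPerm := by
  refine (Subgroup.closure_le _).2 ?_
  rintro _ (rfl | rfl)
  · rw [x_zero]
    exact mem_dyadicOrderPerm_of (fun _ => rfl) (fun _ => rfl) x0fun_strictMono
      (fun _ => IsDyadic.x0fun) (fun _ => IsDyadic.x0inv)
  · rw [x_one]
    exact mem_dyadicOrderPerm_of (fun _ => rfl) (fun _ => rfl) x1fun_strictMono
      (fun _ => IsDyadic.x1fun) (fun _ => IsDyadic.x1inv)

/-- Extended to `ℝ` by clamping: `act f u = act f 0` for `u < 0` and `act f u = act f 1` for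
`u > 1`. -/
def act (f : Equiv.Perm I) : ℝ → ℝ := IccExtend zero_le_one fun t => (f t : ℝ)

section act

variable {f : Equiv.Perm I} {u : ℝ}

lemma act_of_mem (hu : u ∈ Icc (0 : ℝ) 1) : act f u = f ⟨u, hu⟩ := IccExtend_of_mem _ _ hu

lemma act_mem (f : Equiv.Perm I) (u : ℝ) : act f u ∈ Icc (0 : ℝ) 1 := (f _).2

lemma act_mul (f g : Equiv.Perm I) (u : ℝ) : act (f * g) u = act f (act g u) := by
  simp [act, IccExtend, projIcc_val]

lemma act_one (hu : u ∈ Icc (0 : ℝ) 1) : act 1 u = u := by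
  simp [act_of_mem hu]

lemma act_inv_act (hu : u ∈ Icc (0 : ℝ) 1) : act f⁻¹ (act f u) = u := by
  rw [← act_mul, inv_mul_cancel, act_one hu]

lemma act_act_inv (hu : u ∈ Icc (0 : ℝ) 1) : act f (act f⁻¹ u) = u := by
  rw [← act_mul, mul_inv_cancel, act_one hu]

lemma act_inv_eq_self (hu : u ∈ Icc (0 : ℝ) 1) (h : act f u = u) : act f⁻¹ u = u := by
  conv_lhs => rw [← h]
  exact act_inv_act hu

lemma strictMonoOn_act (hf : f ∈ F) : StrictMonoOn (act f) (Icc 0 1) := fun u hu v hv h => by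
  rw [act_of_mem hu, act_of_mem hv]
  exact (F_le_dyadicOrderPerm hf).1 (show (⟨u, hu⟩ : I) < ⟨v, hv⟩ from h)

lemma IsDyadic.act (hf : f ∈ F) (hu : u ∈ Icc (0 : ℝ) 1) (h : IsDyadic u) :
    IsDyadic (act f u) := by
  rw [act_of_mem hu]
  exact ((F_le_dyadicOrderPerm hf).2 ⟨u, hu⟩).2 h

lemma act_mem_Ioo (hf : f ∈ F) (hu : u ∈ Ioo (0 : ℝ) 1) : act f u ∈ Ioo (0 : ℝ) 1 :=
  ⟨(act_mem f 0).1.trans_lt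
      (strictMonoOn_act hf (left_mem_Icc.2 zero_le_one) (Ioo_subset_Icc_self hu) hu.1),
    (strictMonoOn_act hf (Ioo_subset_Icc_self hu) (right_mem_Icc.2 zero_le_one) hu.2).trans_le
      (act_mem f 1).2⟩

end act

lemma mem_HU_iff {U : Set ℝ} {f : Equiv.Perm I} :
    f ∈ HU U ↔ f ∈ F ∧ ∀ u ∈ U, u ∈ Icc (0 : ℝ) 1 → act f u = u := by
  refine and_congr_right fun _ => ⟨fun h u hu hu' => ?_, fun h t ht => ?_⟩
  · rw [act_of_mem hu', h ⟨u, hu'⟩ hu]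
  · exact Subtype.ext (by simpa [act_of_mem t.2] using h t ht t.2)

lemma HU_anti {U V : Set ℝ} (h : U ⊆ V) : HU V ≤ HU U := fun _ hf =>
  mem_HU_iff.2 ⟨(mem_HU_iff.1 hf).1, fun u hu => (mem_HU_iff.1 hf).2 u (h hu)⟩

lemma mem_HU_insert {U : Set ℝ} {f : Equiv.Perm I} {α : ℝ} (hf : f ∈ HU U) (hα : act f α = α) :
    f ∈ HU (insert α U) :=
  mem_HU_iff.2 ⟨(mem_HU_iff.1 hf).1, by
    rintro u (rfl | hu) hu'
    exacts [hα, (mem_HU_iff.1 hf).2 u hu hu']⟩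

/-- `H_{g(U)} = g H_U g⁻¹`. -/
lemma HU_image_le {N : Subgroup (Equiv.Perm I)} {U : Set ℝ} {g : Equiv.Perm I} (hg : g ∈ F)
    (hgN : g ∈ N) (hUN : HU U ≤ N) : HU (act g '' U) ≤ N := by
  intro h hh
  obtain ⟨hhF, hhU⟩ := mem_HU_iff.1 hh
  have hconj : g⁻¹ * h * g ∈ HU U := mem_HU_iff.2
    ⟨mul_mem (mul_mem (inv_mem hg) hhF) hg, fun u hu hu' => by
      rw [act_mul, act_mul, hhU _ (mem_image_of_mem _ hu) (act_mem _ _), act_inv_act hu']⟩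
  simpa [mul_assoc] using mul_mem (mul_mem hgN (hUN hconj)) (inv_mem hgN)

def SupportedIn (f : Equiv.Perm I) (c d : ℝ) : Prop :=
  ∀ u ∈ Icc (0 : ℝ) 1, u ≤ c ∨ d ≤ u → act f u = u

lemma SupportedIn.conj {f k : Equiv.Perm I} {c d : ℝ} (hf : f ∈ F) (hc : c ∈ Icc (0 : ℝ) 1)
    (hd : d ∈ Icc (0 : ℝ) 1) (hk : SupportedIn k (act f c) (act f d)) :
    SupportedIn (f⁻¹ * k * f) c d := by
  intro u hu huc
  rw [act_mul, act_mul, hk _ (act_mem _ _), act_inv_act hu]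
  exact huc.imp (fun h => (strictMonoOn_act hf).monotoneOn hu hc h)
    (fun h => (strictMonoOn_act hf).monotoneOn hd hu h)

lemma affine_mem_Icc {c d u : ℝ} (hc : 0 ≤ c) (hcd : c ≤ d) (hd : d ≤ 1) (hu : u ∈ Icc (0 : ℝ) 1) :
    c + (d - c) * u ∈ Icc (0 : ℝ) 1 :=
  ⟨by nlinarith [hu.1], by nlinarith [hu.2]⟩

def IsCopy (c d : ℝ) (e e' : Equiv.Perm I) : Prop :=
  (∀ u ∈ Icc (0 : ℝ) 1, act e' (c + (d - c) * u) = c + (d - c) * act e u) ∧ SupportedIn e' c d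

section IsCopy

variable {c d : ℝ} {e e' e₁ e₂ e₁' e₂' : Equiv.Perm I}

lemma IsCopy.one (hc : 0 ≤ c) (hcd : c ≤ d) (hd : d ≤ 1) : IsCopy c d 1 1 :=
  ⟨fun _ hu => by rw [act_one hu, act_one (affine_mem_Icc hc hcd hd hu)], fun _ hu _ => act_one hu⟩

lemma IsCopy.mul (h₁ : IsCopy c d e₁ e₁') (h₂ : IsCopy c d e₂ e₂') :
    IsCopy c d (e₁ * e₂) (e₁' * e₂') :=
  ⟨fun u hu => by rw [act_mul, act_mul, h₂.1 u hu, h₁.1 _ (act_mem _ _)],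
    fun u hu h => by rw [act_mul, h₂.2 u hu h, h₁.2 u hu h]⟩

lemma IsCopy.inv (hc : 0 ≤ c) (hcd : c ≤ d) (hd : d ≤ 1) (h : IsCopy c d e e') :
    IsCopy c d e⁻¹ e'⁻¹ := by
  refine ⟨fun u hu => ?_, fun u hu h' => act_inv_eq_self hu (h.2 u hu h')⟩
  conv_lhs => rw [← act_act_inv (f := e) hu, ← h.1 _ (act_mem _ _)]
  exact act_inv_act (affine_mem_Icc hc hcd hd (act_mem _ _))

end IsCopy

lemma IsCopy.trans {c d c' d' : ℝ} {e e' e'' : Equiv.Perm I} (hc : 0 ≤ c) (hcd : c ≤ d)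
    (hd : d ≤ 1) (hc'd' : c' < d') (h : IsCopy c d e e') (h' : IsCopy c' d' e' e'') :
    IsCopy (c' + (d' - c') * c) (c' + (d' - c') * d) e e'' := by
  refine ⟨fun u hu => ?_, fun u hu hout => ?_⟩
  · have hcomp : c' + (d' - c') * c + (c' + (d' - c') * d - (c' + (d' - c') * c)) * u =
        c' + (d' - c') * (c + (d - c) * u) := by ring
    rw [hcomp, h'.1 _ (affine_mem_Icc hc hcd hd hu), h.1 u hu]
    ring
  rcases le_or_gt u c' with hu' | hu'
  · exact h'.2 u hu (.inl hu')
  rcases le_or_gt d' u with hu'' | hu''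
  · exact h'.2 u hu (.inr hu'')
  have hpos : 0 < d' - c' := sub_pos.2 hc'd'
  obtain ⟨w, rfl⟩ : ∃ w, u = c' + (d' - c') * w := ⟨(u - c') / (d' - c'), by field_simp; ring⟩
  have hwI : w ∈ Icc (0 : ℝ) 1 := ⟨by nlinarith, by nlinarith⟩
  have hwout : w ≤ c ∨ d ≤ w := hout.imp (fun h => le_of_mul_le_mul_left (by linarith) hpos)
    (fun h => le_of_mul_le_mul_left (by linarith) hpos)
  rw [h'.1 w hwI, h.2 w hwI hwout]

lemma exists_isCopy {c d : ℝ} (hc : 0 ≤ c) (hcd : c ≤ d) (hd : d ≤ 1)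
    (h₀ : ∃ w ∈ F, IsCopy c d x₀ w) (h₁ : ∃ w ∈ F, IsCopy c d x₁ w) {e : Equiv.Perm I}
    (he : e ∈ F) : ∃ e' ∈ F, IsCopy c d e e' := by
  induction he using Subgroup.closure_induction with
  | mem e he =>
    rcases he with rfl | rfl
    exacts [x_zero ▸ h₀, x_one ▸ h₁]
  | one => exact ⟨1, one_mem F, IsCopy.one hc hcd hd⟩
  | mul _ _ _ _ ih₁ ih₂ =>
    obtain ⟨e₁', he₁'F, he₁'⟩ := ih₁
    obtain ⟨e₂', he₂'F, he₂'⟩ := ih₂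
    exact ⟨e₁' * e₂', mul_mem he₁'F he₂'F, he₁'.mul he₂'⟩
  | inv _ _ ih =>
    obtain ⟨e', he'F, he'⟩ := ih
    exact ⟨e'⁻¹, inv_mem he'F, he'.inv hc hcd hd⟩

lemma isCopy_of_forall {c d : ℝ} {e e' : Equiv.Perm I} (hc : 0 ≤ c) (hcd : c ≤ d) (hd : d ≤ 1)
    (φ φ' : ℝ → ℝ) (he : ∀ t : I, (e t : ℝ) = φ t) (he' : ∀ t : I, (e' t : ℝ) = φ' t)
    (hcopy : ∀ u ∈ Icc (0 : ℝ) 1, φ' (c + (d - c) * u) = c + (d - c) * φ u)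
    (hsupp : ∀ u ∈ Icc (0 : ℝ) 1, u ≤ c ∨ d ≤ u → φ' u = u) : IsCopy c d e e' :=
  ⟨fun u hu => by
    rw [act_of_mem (affine_mem_Icc hc hcd hd hu), act_of_mem hu, he, he']
    exact hcopy u hu,
   fun u hu h => by rw [act_of_mem hu, he']; exact hsupp u hu h⟩

lemma isCopy_x₀_right : IsCopy (1 / 2) 1 x₀ x₁ :=
  isCopy_of_forall (by norm_num) (by norm_num) le_rfl x0fun x1fun (fun _ => rfl) (fun _ => rfl)
    (fun u ⟨_, _⟩ => by grind (splits := 40) [x0fun, x1fun])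
    (fun u ⟨_, _⟩ _ => by grind (splits := 40) [x1fun])

-- `x₀ * x₁ * x₀⁻¹` is the generator `x 2`.
lemma isCopy_x₁_right : IsCopy (1 / 2) 1 x₁ (x₀ * x₁ * x₀⁻¹) :=
  isCopy_of_forall (by norm_num) (by norm_num) le_rfl x1fun (fun u => x0fun (x1fun (x0inv u)))
    (fun _ => rfl) (fun _ => rfl)
    (fun u ⟨_, _⟩ => by grind (splits := 40) [x0fun, x1fun, x0inv])
    (fun u ⟨_, _⟩ _ => by grind (splits := 40) [x0fun, x1fun, x0inv])

lemma isCopy_x₀_left : IsCopy 0 (1 / 2) x₀ (x₀⁻¹ * x₁⁻¹ * x₀ * x₀) :=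
  isCopy_of_forall le_rfl (by norm_num) (by norm_num) x0fun
    (fun u => x0inv (x1inv (x0fun (x0fun u)))) (fun _ => rfl) (fun _ => rfl)
    (fun u ⟨_, _⟩ => by grind (splits := 40) [x0fun, x0inv, x1inv])
    (fun u ⟨_, _⟩ _ => by grind (splits := 40) [x0fun, x0inv, x1inv])

lemma isCopy_x₁_left :
    IsCopy 0 (1 / 2) x₁ (x₀⁻¹ * x₁⁻¹ * x₀ * x₁⁻¹ * x₀⁻¹ * x₁ * x₁ * x₀) :=
  isCopy_of_forall le_rfl (by norm_num) (by norm_num) x1fun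
    (fun u => x0inv (x1inv (x0fun (x1inv (x0inv (x1fun (x1fun (x0fun u))))))))
    (fun _ => rfl) (fun _ => rfl)
    (fun u ⟨_, _⟩ => by grind (splits := 40) [x0fun, x0inv, x1fun, x1inv])
    (fun u ⟨_, _⟩ _ => by grind (splits := 40) [x0fun, x0inv, x1fun, x1inv])

lemma exists_isCopy_right {e : Equiv.Perm I} (he : e ∈ F) : ∃ e' ∈ F, IsCopy (1 / 2) 1 e e' :=
  exists_isCopy (by norm_num) (by norm_num) le_rfl ⟨x₁, x₁_mem_F, isCopy_x₀_right⟩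
    (by refine ⟨_, ?_, isCopy_x₁_right⟩; simp [Subgroup.mul_mem_cancel_right, x₀_mem_F, x₁_mem_F])
    he

lemma exists_isCopy_left {e : Equiv.Perm I} (he : e ∈ F) : ∃ e' ∈ F, IsCopy 0 (1 / 2) e e' :=
  exists_isCopy le_rfl (by norm_num) (by norm_num)
    (by refine ⟨_, ?_, isCopy_x₀_left⟩; simp [Subgroup.mul_mem_cancel_right, x₀_mem_F, x₁_mem_F])
    (by refine ⟨_, ?_, isCopy_x₁_left⟩; simp [Subgroup.mul_mem_cancel_right, x₀_mem_F, x₁_mem_F])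
    he

lemma exists_isCopy_middle {e : Equiv.Perm I} (he : e ∈ F) :
    ∃ e'' ∈ F, IsCopy (1 / 2) (3 / 4) e e'' := by
  obtain ⟨e', he'F, he'⟩ := exists_isCopy_left he
  obtain ⟨e'', he''F, he''⟩ := exists_isCopy_right he'F
  have h := he'.trans le_rfl (by norm_num) (by norm_num) (by norm_num) he''
  norm_num at h
  exact ⟨e'', he''F, h⟩

lemma act_x₀_quarter : act x₀ (1 / 4) = 1 / 2 := by
  rw [act_of_mem ⟨by norm_num, by norm_num⟩]
  show x0fun (1 / 4) = 1 / 2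
  norm_num [x0fun]

lemma act_x₀_inv_three_quarters : act x₀⁻¹ (3 / 4) = 1 / 2 := by
  rw [act_of_mem ⟨by norm_num, by norm_num⟩]
  show x0inv (3 / 4) = 1 / 2
  norm_num [x0inv]

/-- Induction on the denominator: a point of `(0,1/2)` or `(1/2,1)` is the image of a point
with smaller denominator under the copy map `u ↦ u/2` or `u ↦ (u+1)/2`, and `x₀^{±1}` moves
`1/4` and `3/4` to `1/2`. -/
lemma exists_act_eq_half {u : ℝ} (hudy : IsDyadic u) (hu : u ∈ Ioo (0 : ℝ) 1) :
    ∃ f ∈ F, act f u = 1 / 2 := by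
  obtain ⟨a, n, rfl⟩ := hudy
  induction n generalizing a with
  | zero =>
    have : 0 < a ∧ a < 1 := by exact_mod_cast (by simpa using hu : (0 : ℝ) < a ∧ (a : ℝ) < 1)
    omega
  | succ n ih =>
    have h2n : (0 : ℝ) < 2 ^ n := by positivity
    have hdouble : (a : ℝ) / 2 ^ n = 2 * (a / 2 ^ (n + 1)) := by rw [pow_succ]; field_simp
    rcases lt_trichotomy ((a : ℝ) / 2 ^ (n + 1)) (1 / 2) with h | h | h
    · have hv : (a : ℝ) / 2 ^ n ∈ Ioo (0 : ℝ) 1 :=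
        ⟨by rw [hdouble]; linarith [hu.1], by rw [hdouble]; linarith⟩
      obtain ⟨e, heF, he⟩ := ih a hv
      obtain ⟨e', he'F, he'⟩ := exists_isCopy_left heF
      have hcopy := he'.1 _ (Ioo_subset_Icc_self hv)
      rw [he, show 0 + (1 / 2 - 0) * ((a : ℝ) / 2 ^ n) = a / 2 ^ (n + 1) by rw [hdouble]; ring,
        show (0 : ℝ) + (1 / 2 - 0) * (1 / 2) = 1 / 4 by norm_num] at hcopy
      exact ⟨x₀ * e', mul_mem x₀_mem_F he'F, by rw [act_mul, hcopy, act_x₀_quarter]⟩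
    · exact ⟨1, one_mem F, by rw [act_one (Ioo_subset_Icc_self hu), h]⟩
    · have ha : 2 ^ n ≤ a := by
        have : (2 : ℝ) ^ n < a := by rw [pow_succ] at h; field_simp at h; linarith
        exact_mod_cast this.le
      have hshift : ((a - 2 ^ n : ℕ) : ℝ) / 2 ^ n = 2 * (a / 2 ^ (n + 1)) - 1 := by
        push_cast [Nat.cast_sub ha]
        rw [pow_succ]
        field_simp
      have hv : ((a - 2 ^ n : ℕ) : ℝ) / 2 ^ n ∈ Ioo (0 : ℝ) 1 :=
        ⟨by rw [hshift]; linarith, by rw [hshift]; linarith [hu.2]⟩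
      obtain ⟨e, heF, he⟩ := ih (a - 2 ^ n) hv
      obtain ⟨e', he'F, he'⟩ := exists_isCopy_right heF
      have hcopy := he'.1 _ (Ioo_subset_Icc_self hv)
      rw [he, hshift, show 1 / 2 + (1 - 1 / 2) * (2 * ((a : ℝ) / 2 ^ (n + 1)) - 1) =
          a / 2 ^ (n + 1) by ring,
        show (1 / 2 : ℝ) + (1 - 1 / 2) * (1 / 2) = 3 / 4 by norm_num] at hcopy
      exact ⟨x₀⁻¹ * e', mul_mem (inv_mem x₀_mem_F) he'F,
        by rw [act_mul, hcopy, act_x₀_inv_three_quarters]⟩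

lemma exists_act_eq {u v : ℝ} (hu : u ∈ Ioo (0 : ℝ) 1) (hv : v ∈ Ioo (0 : ℝ) 1) (hudy : IsDyadic u)
    (hvdy : IsDyadic v) : ∃ f ∈ F, act f u = v := by
  obtain ⟨f, hfF, hf⟩ := exists_act_eq_half hudy hu
  obtain ⟨g, hgF, hg⟩ := exists_act_eq_half hvdy hv
  exact ⟨g⁻¹ * f, mul_mem (inv_mem hgF) hfF,
    by rw [act_mul, hf, ← hg, act_inv_act (Ioo_subset_Icc_self hv)]⟩

lemma exists_supported_act_eq_of_isCopy {c d u v : ℝ}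
    (hcopy : ∀ e ∈ F, ∃ e' ∈ F, IsCopy c d e e') (hu : u ∈ Ioo (0 : ℝ) 1) (hv : v ∈ Ioo (0 : ℝ) 1)
    (hudy : IsDyadic u) (hvdy : IsDyadic v) :
    ∃ k ∈ F, SupportedIn k c d ∧ act k (c + (d - c) * u) = c + (d - c) * v := by
  obtain ⟨e, heF, he⟩ := exists_act_eq hu hv hudy hvdy
  obtain ⟨k, hkF, hk⟩ := hcopy e heF
  exact ⟨k, hkF, hk.2, by rw [hk.1 u (Ioo_subset_Icc_self hu), he]⟩

lemma exists_act_eq_half_and_act_eq_three_quarters {c d : ℝ} (hc : 0 < c) (hcd : c < d)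
    (hd : d < 1) (hcdy : IsDyadic c) (hddy : IsDyadic d) :
    ∃ f ∈ F, act f c = 1 / 2 ∧ act f d = 3 / 4 := by
  have hcI : c ∈ Icc (0 : ℝ) 1 := ⟨hc.le, (hcd.trans hd).le⟩
  have hdI : d ∈ Icc (0 : ℝ) 1 := ⟨(hc.trans hcd).le, hd.le⟩
  obtain ⟨f, hfF, hfc⟩ := exists_act_eq (v := 1 / 2) ⟨hc, hcd.trans hd⟩
    ⟨by norm_num, by norm_num⟩ hcdy ⟨1, 1, by norm_num⟩
  have hQ : act f d ∈ Ioo (1 / 2 : ℝ) 1 :=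
    ⟨hfc ▸ strictMonoOn_act hfF hcI hdI hcd, (act_mem_Ioo hfF ⟨hc.trans hcd, hd⟩).2⟩
  obtain ⟨k, hkF, hk, hkQ⟩ := exists_supported_act_eq_of_isCopy (fun _ => exists_isCopy_right)
    (u := 2 * act f d - 1) (v := 1 / 2) ⟨by linarith [hQ.1], by linarith [hQ.2]⟩
    ⟨by norm_num, by norm_num⟩
    (((hddy.act hfF hdI).two_mul).sub ⟨1, 0, by norm_num⟩ (by linarith [hQ.1])) ⟨1, 1, by norm_num⟩
  rw [show 1 / 2 + (1 - 1 / 2) * (2 * act f d - 1) = act f d by ring,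
    show (1 / 2 : ℝ) + (1 - 1 / 2) * (1 / 2) = 3 / 4 by norm_num] at hkQ
  refine ⟨k * f, mul_mem hkF hfF, ?_, by rw [act_mul, hkQ]⟩
  rw [act_mul, hfc, hk _ ⟨by norm_num, by norm_num⟩ (.inl le_rfl)]

/-- Conjugating `(c,d)` onto `(1/2, 3/4)` reduces to the copy of `F` supported there. -/
lemma exists_supported_act_eq {a b c d : ℝ} (hc : 0 < c) (hd : d < 1) (ha : a ∈ Ioo c d)
    (hb : b ∈ Ioo c d) (hcdy : IsDyadic c) (hddy : IsDyadic d) (hady : IsDyadic a)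
    (hbdy : IsDyadic b) : ∃ h ∈ F, SupportedIn h c d ∧ act h a = b := by
  have hcI : c ∈ Icc (0 : ℝ) 1 := ⟨hc.le, (ha.1.trans ha.2 |>.trans hd).le⟩
  have hdI : d ∈ Icc (0 : ℝ) 1 := ⟨(hc.trans (ha.1.trans ha.2)).le, hd.le⟩
  have hI : ∀ {y}, y ∈ Ioo c d → y ∈ Icc (0 : ℝ) 1 :=
    fun hy => ⟨(hc.trans hy.1).le, (hy.2.trans hd).le⟩
  obtain ⟨f, hfF, hfc, hfd⟩ :=
    exists_act_eq_half_and_act_eq_three_quarters hc (ha.1.trans ha.2) hd hcdy hddy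
  have himage : ∀ {y}, y ∈ Ioo c d → act f y ∈ Ioo (1 / 2 : ℝ) (3 / 4) := fun hy =>
    ⟨hfc ▸ strictMonoOn_act hfF hcI (hI hy) hy.1, hfd ▸ strictMonoOn_act hfF (hI hy) hdI hy.2⟩
  have hA := himage ha
  have hB := himage hb
  obtain ⟨k, hkF, hk, hkA⟩ := exists_supported_act_eq_of_isCopy (fun _ => exists_isCopy_middle)
    (u := 2 * (2 * act f a) - 2) (v := 2 * (2 * act f b) - 2)
    ⟨by linarith [hA.1], by linarith [hA.2]⟩ ⟨by linarith [hB.1], by linarith [hB.2]⟩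
    ((hady.act hfF (hI ha)).two_mul.two_mul.sub ⟨2, 0, by norm_num⟩ (by linarith [hA.1]))
    ((hbdy.act hfF (hI hb)).two_mul.two_mul.sub ⟨2, 0, by norm_num⟩ (by linarith [hB.1]))
  have hscale : ∀ y : ℝ, 1 / 2 + (3 / 4 - 1 / 2) * (2 * (2 * y) - 2) = y := fun y => by ring
  rw [hscale, hscale] at hkA
  refine ⟨f⁻¹ * k * f, mul_mem (mul_mem (inv_mem hfF) hkF) hfF,
    SupportedIn.conj hfF hcI hdI (by rwa [hfc, hfd]), ?_⟩
  rw [act_mul, act_mul, hkA, act_inv_act (hI hb)]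

lemma Set.Finite.exists_dyadic_gap_below {Y : Set ℝ} (hY : Y.Finite) {m : ℝ} (hm : 0 < m) :
    ∃ c, IsDyadic c ∧ 0 < c ∧ c < m ∧ ∀ y ∈ Y, y < m → y < c := by
  have hP : (insert 0 (Y ∩ Iio m)).Finite := (hY.inter_of_left _).insert 0
  have hpm : sSup (insert 0 (Y ∩ Iio m)) < m := by
    rcases (insert_nonempty _ _).csSup_mem hP with h | h
    exacts [h.trans_lt hm, h.2]
  obtain ⟨c, hcdy, hpc, hcm⟩ := exists_dyadic_btwn (le_csSup hP.bddAbove (mem_insert _ _)) hpm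
  exact ⟨c, hcdy, (le_csSup hP.bddAbove (mem_insert _ _)).trans_lt hpc, hcm,
    fun y hy hym => (le_csSup hP.bddAbove (mem_insert_of_mem _ ⟨hy, hym⟩)).trans_lt hpc⟩

lemma Set.Finite.exists_dyadic_gap_above {Y : Set ℝ} (hY : Y.Finite) {M : ℝ} (hM : 0 ≤ M)
    (hM1 : M < 1) : ∃ d, IsDyadic d ∧ M < d ∧ d < 1 ∧ ∀ y ∈ Y, M < y → d < y := by
  have hQ : (insert 1 (Y ∩ Ioi M)).Finite := (hY.inter_of_left _).insert 1
  have hMq : M < sInf (insert 1 (Y ∩ Ioi M)) := by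
    rcases (insert_nonempty _ _).csInf_mem hQ with h | h
    exacts [hM1.trans_eq h.symm, h.2]
  obtain ⟨d, hddy, hMd, hdq⟩ := exists_dyadic_btwn hM hMq
  exact ⟨d, hddy, hMd, hdq.trans_le (csInf_le hQ.bddBelow (mem_insert _ _)),
    fun y hy hMy => hdq.trans_le (csInf_le hQ.bddBelow (mem_insert_of_mem _ ⟨hy, hMy⟩))⟩

/-- It suffices to move the largest point of `T` in `(c', α)` below `c`. -/
lemma exists_supported_push_below {T : Set ℝ} (hT : T.Finite) (hTdy : ∀ t ∈ T, IsDyadic t)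
    {c' c α : ℝ} (hc' : 0 < c') (hc'c : c' < c) (hcα : c < α) (hα : α < 1) (hc'dy : IsDyadic c')
    (hcdy : IsDyadic c) (hαdy : IsDyadic α) :
    ∃ s ∈ F, SupportedIn s c' α ∧ ∀ t ∈ T, t ∈ Icc (0 : ℝ) 1 → t < α → act s t ≤ c := by
  set P := insert c (T ∩ Ioo c' α)
  have hP : P.Finite := (hT.inter_of_left _).insert c
  have hμ : sSup P ∈ Ioo c' α ∧ IsDyadic (sSup P) := by
    rcases (insert_nonempty _ _).csSup_mem hP with h | h
    exacts [h ▸ ⟨⟨hc'c, hcα⟩, hcdy⟩, ⟨h.2, hTdy _ h.1⟩]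
  obtain ⟨s, hsF, hs, hsμ⟩ := exists_supported_act_eq hc' hα hμ.1 ⟨hc'c, hcα⟩ hc'dy hαdy hμ.2 hcdy
  refine ⟨s, hsF, hs, fun t ht htI htα => ?_⟩
  rcases le_or_gt t c' with htc' | htc'
  · rw [hs t htI (.inl htc')]
    exact htc'.trans hc'c.le
  · rw [← hsμ]
    exact (strictMonoOn_act hsF).monotoneOn htI
      ⟨hc'.le.trans hμ.1.1.le, hμ.1.2.le.trans hα.le⟩
      (le_csSup hP.bddAbove (mem_insert_of_mem _ ⟨ht, htc', htα⟩))

lemma exists_supported_push_above {T : Set ℝ} (hT : T.Finite) (hTdy : ∀ t ∈ T, IsDyadic t)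
    {α d d' : ℝ} (hα : 0 < α) (hαd : α < d) (hdd' : d < d') (hd' : d' < 1) (hαdy : IsDyadic α)
    (hddy : IsDyadic d) (hd'dy : IsDyadic d') :
    ∃ s ∈ F, SupportedIn s α d' ∧ ∀ t ∈ T, t ∈ Icc (0 : ℝ) 1 → α < t → d ≤ act s t := by
  set P := insert d (T ∩ Ioo α d')
  have hP : P.Finite := (hT.inter_of_left _).insert d
  have hν : sInf P ∈ Ioo α d' ∧ IsDyadic (sInf P) := by
    rcases (insert_nonempty _ _).csInf_mem hP with h | h
    exacts [h ▸ ⟨⟨hαd, hdd'⟩, hddy⟩, ⟨h.2, hTdy _ h.1⟩]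
  obtain ⟨s, hsF, hs, hsν⟩ := exists_supported_act_eq hα hd' hν.1 ⟨hαd, hdd'⟩ hαdy hd'dy hν.2 hddy
  refine ⟨s, hsF, hs, fun t ht htI hαt => ?_⟩
  rcases le_or_gt d' t with hd't | hd't
  · rw [hs t htI (.inr hd't)]
    exact hdd'.le.trans hd't
  · rw [← hsν]
    exact (strictMonoOn_act hsF).monotoneOn
      ⟨hα.le.trans hν.1.1.le, hν.1.2.le.trans hd'.le⟩ htI
      (csInf_le hP.bddBelow (mem_insert_of_mem _ ⟨ht, hαt, hd't⟩))

lemma exists_supported_separating {T : Set ℝ} (hT : T.Finite) (hTI : T ⊆ Icc 0 1)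
    (hTdy : ∀ t ∈ T, IsDyadic t) {c' c α d d' : ℝ} (hc' : 0 < c') (hc'c : c' < c) (hcα : c < α)
    (hαd : α < d) (hdd' : d < d') (hd' : d' < 1) (hc'dy : IsDyadic c') (hcdy : IsDyadic c)
    (hαdy : IsDyadic α) (hddy : IsDyadic d) (hd'dy : IsDyadic d') :
    ∃ s ∈ F, SupportedIn s c' d' ∧ act s α = α ∧ ∀ t ∈ T, t ≠ α → act s t ≤ c ∨ d ≤ act s t := by
  have hα : 0 < α := hc'.trans (hc'c.trans hcα)
  have hαI : α ∈ Icc (0 : ℝ) 1 := ⟨hα.le, (hαd.trans (hdd'.trans hd')).le⟩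
  obtain ⟨s₁, hs₁F, hs₁, hs₁T⟩ :=
    exists_supported_push_below hT hTdy hc' hc'c hcα (hαd.trans (hdd'.trans hd')) hc'dy hcdy hαdy
  obtain ⟨s₂, hs₂F, hs₂, hs₂T⟩ :=
    exists_supported_push_above hT hTdy hα hαd hdd' hd' hαdy hddy hd'dy
  have hs₁α : act s₁ α = α := hs₁ α hαI (.inr le_rfl)
  have hs₂α : act s₂ α = α := hs₂ α hαI (.inl le_rfl)
  refine ⟨s₂ * s₁, mul_mem hs₂F hs₁F, fun u hu hout => ?_, by rw [act_mul, hs₁α, hs₂α],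
    fun t ht htα => ?_⟩
  · rw [act_mul, hs₁ u hu (hout.imp_right (hαd.trans hdd').le.trans),
      hs₂ u hu (hout.imp_left fun h => h.trans (hc'c.trans hcα).le)]
  rcases htα.lt_or_gt with htα | hαt
  · have hlt : act s₁ t < α := hs₁α ▸ strictMonoOn_act hs₁F (hTI ht) hαI htα
    rw [act_mul, hs₂ _ (act_mem _ _) (.inl hlt.le)]
    exact .inl (hs₁T t ht (hTI ht) htα)
  · have hgt : α < act s₁ t := hs₁α ▸ strictMonoOn_act hs₁F hαI (hTI ht) hαt
    rw [act_mul, hs₁ t (hTI ht) (.inr hαt.le)]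
    exact .inr (hs₂T t ht (hTI ht) hαt)

/-- `s` pushes the points of `T` out of an interval around `α` and `β` containing no point of
`S`, and `h` is supported in that interval. -/
lemma exists_mem_HU_act_eq {S T : Set ℝ} (hS : S.Finite) (hT : T.Finite) (hTI : T ⊆ Icc 0 1)
    (hTdy : ∀ t ∈ T, IsDyadic t) {α β : ℝ} (hα : α ∈ Ioo (0 : ℝ) 1) (hβ : β ∈ Ioo (0 : ℝ) 1)
    (hαdy : IsDyadic α) (hβdy : IsDyadic β) (hαT : α ∉ T)
    (hsep : ∀ y ∈ S, y ∈ Icc (0 : ℝ) 1 → y < min α β ∨ max α β < y) :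
    ∃ s ∈ HU (insert α S), ∃ h ∈ HU (S ∪ act s '' T), act h α = β := by
  obtain ⟨c', hc'dy, hc'0, hc'm, hSc'⟩ := hS.exists_dyadic_gap_below (lt_min hα.1 hβ.1)
  obtain ⟨d', hd'dy, hMd', hd'1, hSd'⟩ :=
    hS.exists_dyadic_gap_above (hα.1.le.trans (le_max_left _ _)) (max_lt hα.2 hβ.2)
  obtain ⟨c, hcdy, hc'c, hcm⟩ := exists_dyadic_btwn hc'0.le hc'm
  obtain ⟨d, hddy, hMd, hdd'⟩ := exists_dyadic_btwn (hα.1.le.trans (le_max_left _ _)) hMd'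
  have hSout : ∀ y ∈ S, y ∈ Icc (0 : ℝ) 1 → y ≤ c' ∨ d' ≤ y := fun y hy hyI =>
    (hsep y hy hyI).imp (fun h => (hSc' y hy h).le) (fun h => (hSd' y hy h).le)
  obtain ⟨s, hsF, hs, hsα, hsT⟩ := exists_supported_separating hT hTI hTdy hc'0 hc'c
    (hcm.trans_le (min_le_left _ _)) ((le_max_left _ _).trans_lt hMd) hdd' hd'1 hc'dy hcdy hαdy hddy
    hd'dy
  obtain ⟨h, hhF, hh, hhα⟩ := exists_supported_act_eq (hc'0.trans hc'c) (hdd'.trans hd'1)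
    ⟨hcm.trans_le (min_le_left _ _), (le_max_left _ _).trans_lt hMd⟩
    ⟨hcm.trans_le (min_le_right _ _), (le_max_right _ _).trans_lt hMd⟩ hcdy hddy hαdy hβdy
  refine ⟨s, mem_HU_insert (mem_HU_iff.2 ⟨hsF, fun y hy hyI => hs y hyI (hSout y hy hyI)⟩) hsα,
    h, mem_HU_iff.2 ⟨hhF, ?_⟩, hhα⟩
  rintro _ (hy | ⟨t, ht, rfl⟩) hyI
  · exact hh _ hyI ((hSout _ hy hyI).imp (fun h => h.trans hc'c.le) hdd'.le.trans)
  · exact hh _ hyI (hsT t ht (ne_of_mem_of_not_mem ht hαT))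

/-- `f = h * (h⁻¹ * f)` with `h` from `exists_mem_HU_act_eq`: `h⁻¹ * f ∈ H_{S ∪ {α}}`, and
`h ∈ s H_T s⁻¹`. -/
lemma HU_le_of_HU_insert_le {N : Subgroup (Equiv.Perm I)} {S T : Set ℝ} {α : ℝ}
    (hS : S.Finite) (hT : T.Finite) (hTI : T ⊆ Icc 0 1) (hTdy : ∀ t ∈ T, IsDyadic t)
    (hα : α ∈ Ioo (0 : ℝ) 1) (hαdy : IsDyadic α) (hαS : α ∉ S) (hαT : α ∉ T)
    (hSN : HU (insert α S) ≤ N) (hTN : HU T ≤ N) : HU S ≤ N := by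
  intro f hf
  obtain ⟨hfF, hfS⟩ := mem_HU_iff.1 hf
  have hαI := Ioo_subset_Icc_self hα
  have hsep : ∀ y ∈ S, y ∈ Icc (0 : ℝ) 1 → y < min α (act f α) ∨ max α (act f α) < y := by
    intro y hy hyI
    have hmono := (strictMonoOn_act hfF).lt_iff_lt hyI hαI
    rw [hfS y hy hyI] at hmono
    rcases (ne_of_mem_of_not_mem hy hαS).lt_or_gt with hyα | hαy
    · exact .inl (lt_min hyα (hmono.2 hyα))
    · have hmono' := (strictMonoOn_act hfF).lt_iff_lt hαI hyI
      rw [hfS y hy hyI] at hmono'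
      exact .inr (max_lt hαy (hmono'.2 hαy))
  obtain ⟨s, hs, h, hh, hhα⟩ := exists_mem_HU_act_eq hS hT hTI hTdy hα (act_mem_Ioo hfF hα) hαdy
    (hαdy.act hfF hαI) hαT hsep
  have hhN : h ∈ N :=
    HU_image_le (mem_HU_iff.1 hs).1 (hSN hs) hTN (HU_anti subset_union_right hh)
  have hrest : h⁻¹ * f ∈ HU (insert α S) := mem_HU_insert
    (mul_mem (inv_mem (HU_anti subset_union_left hh)) hf) (by rw [act_mul, ← hhα, act_inv_act hαI])
  simpa using mul_mem hhN (hSN hrest)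

lemma HU_le_of_HU_union_le {N : Subgroup (Equiv.Perm I)} {T : Set ℝ} (hT : T.Finite)
    (hTI : T ⊆ Icc 0 1) (hTdy : ∀ t ∈ T, IsDyadic t) (hTN : HU T ≤ N) {D : Set ℝ} (hD : D.Finite)
    (hDdy : ∀ a ∈ D, a ∈ Ioo (0 : ℝ) 1 ∧ IsDyadic a ∧ a ∉ T) {S : Set ℝ} (hS : S.Finite)
    (hSD : Disjoint S D) (hN : HU (S ∪ D) ≤ N) : HU S ≤ N := by
  induction D, hD using Set.Finite.induction_on generalizing S with
  | empty => simpa using hN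
  | @insert a D haD hD ih =>
    obtain ⟨haI, hady, haT⟩ := hDdy a (mem_insert a D)
    refine ih (fun b hb => hDdy b (mem_insert_of_mem a hb)) hS
      (hSD.mono_right (subset_insert a D)) ?_
    refine HU_le_of_HU_insert_le (hS.union hD) hT hTI hTdy haI hady ?_ haT
      (by rwa [← union_insert]) hTN
    rintro (haS | haD')
    exacts [hSD.notMem_of_mem_left haS (mem_insert a D), haD haD']

/-- `g⁻¹` restricts to a strictly monotone self-map of the finite set `U`, i.e. the identity. -/
lemma act_eq_self_of_subset_image {g : Equiv.Perm I} {U : Set ℝ} (hg : g ∈ F) (hU : U.Finite)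
    (hUI : U ⊆ Icc 0 1) (hsub : U ⊆ act g '' U) {u : ℝ} (hu : u ∈ U) : act g u = u := by
  have hmaps : MapsTo (act g⁻¹) U U := by
    intro v hv
    obtain ⟨w, hw, rfl⟩ := hsub hv
    rwa [act_inv_act (hUI hw)]
  have : Finite U := hU.to_subtype
  have hfix : act g⁻¹ u = u := congrArg Subtype.val
    (StrictMono.apply_eq (f := hmaps.restrict) (x := ⟨u, hu⟩)
      fun a b hab => strictMonoOn_act (inv_mem hg) (hUI a.2) (hUI b.2) hab)
  calc act g u = act g (act g⁻¹ u) := by rw [hfix]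
    _ = u := act_act_inv (hUI hu)

/-- Let `U` be a finite set of dyadic rationals in `(0,1)` and `g ∈ F` with
`g ∉ H_U`.  Then there is a proper subset `V ⊊ U` with `H_V ⊆ ⟨H_U, g⟩`. -/
theorem stmt18 (U : Set ℝ) (hfin : U.Finite)
    (hU : ∀ α ∈ U, 0 < α ∧ α < 1 ∧ IsDyadic α)
    (g : Equiv.Perm I) (hgF : g ∈ F) (hg : g ∉ HU U) :
    ∃ V : Set ℝ, V ⊂ U ∧ HU V ≤ (HU U) ⊔ Subgroup.closure {g} := by
  have hUI : U ⊆ Icc 0 1 := fun u hu => ⟨(hU u hu).1.le, (hU u hu).2.1.le⟩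
  have hUW : ¬ U ⊆ act g '' U := fun hsub =>
    hg (mem_HU_iff.2 ⟨hgF, fun u hu _ => act_eq_self_of_subset_image hgF hfin hUI hsub hu⟩)
  have hWN : HU (act g '' U) ≤ HU U ⊔ Subgroup.closure {g} :=
    HU_image_le hgF (Subgroup.mem_sup_right (Subgroup.mem_closure_singleton_self g)) le_sup_left
  refine ⟨U ∩ act g '' U, inter_ssubset_left_iff.2 hUW, ?_⟩
  refine HU_le_of_HU_union_le (hfin.image _) (image_subset_iff.2 fun u _ => act_mem g u)
    ?_ hWN hfin.sdiff ?_ (hfin.inter_of_left _) disjoint_sdiff_inter.symm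
    (by rw [inter_union_sdiff]; exact le_sup_left)
  · rintro _ ⟨u, hu, rfl⟩
    exact (hU u hu).2.2.act hgF (hUI hu)
  · exact fun a ha => ⟨⟨(hU a ha.1).1, (hU a ha.1).2.1⟩, (hU a ha.1).2.2, ha.2⟩
end
end
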